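/- arXiv:0711.2460 — 4 statements merged into one kernel-verified Lean document; each statement's English description precedes it below -/
import Mathlib

section
/- For p ≥ 2, q = p/(p-1), δ = q(q-1)/8, and u, v ≥ 0 with u^p ≥ v^q, the function φ(u,v) = (1 + 2δ/p)u^p + (1 + (2/q - 1)δ)v^q satisfies u·∂φ/∂u + v·∂φ/∂v − φ(u,v) ≥ (p−1)u^{p−2}·u² + (q−1)·u^{2−p}·v². -/
/-! Euler's identity for homogeneous functions turns `u ∂φ/∂u + v ∂φ/∂v - φ` into
`(1 + 2δ/p)(p - 1) u^p + (1 + (2/q - 1)δ)(q - 1) v^q`, and the right-hand side is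
`(p - 1) u^p + (q - 1) u^{2-p} v^2`. Since `δ ≥ 0` and `q ≤ 2`, it suffices that
`u^{2-p} v^2 ≤ v^q`, i.e. `v^{2-q} ≤ u^{p-2}`, which is the constraint `v ≤ u^{p-1}`
(equivalently `v^q ≤ u^p`, as `(p-1)q = p`) raised to the power `2 - q ≥ 0`. -/

open Real

namespace Real

lemma mul_rpow_sub_one {x : ℝ} (hx : 0 ≤ x) {y : ℝ} (hy : y ≠ 0) :
    x * x ^ (y - 1) = x ^ y := by
  rw [mul_comm, ← rpow_add_one' hx (by simpa using hy), sub_add_cancel]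

lemma rpow_sub_two_mul_sq {x : ℝ} (hx : 0 ≤ x) {y : ℝ} (hy : y ≠ 0) :
    x ^ (y - 2) * x ^ 2 = x ^ y := by
  rw [← rpow_add_natCast' hx (by simpa using hy)]
  norm_num

lemma rpow_two_sub_mul_sq_le {p q u v : ℝ} (hu : 0 ≤ u) (hv : 0 ≤ v) (hq : 0 < q)
    (hq2 : q ≤ 2) (hpq : (p - 1) * q = p) (huv : v ^ q ≤ u ^ p) :
    u ^ (2 - p) * v ^ 2 ≤ v ^ q := by
  have hvu : v ≤ u ^ (p - 1) :=
    (rpow_le_rpow_iff hv (rpow_nonneg hu _) hq).mp (by rwa [← rpow_mul hu, hpq])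
  have hvu' : v ^ (2 - q) ≤ u ^ (p - 2) := by
    calc v ^ (2 - q) ≤ (u ^ (p - 1)) ^ (2 - q) := rpow_le_rpow hv hvu (by linarith)
      _ = u ^ (p - 2) := by rw [← rpow_mul hu]; congr 1; linear_combination -hpq
  have hsplit : v ^ 2 = v ^ (2 - q) * v ^ q := by
    rw [← rpow_add' hv (by norm_num), sub_add_cancel]; norm_cast
  have hinv : u ^ (2 - p) = (u ^ (p - 2))⁻¹ := by rw [← rpow_neg hu, neg_sub]
  calc u ^ (2 - p) * v ^ 2 = (u ^ (p - 2))⁻¹ * v ^ (2 - q) * v ^ q := by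
        rw [hsplit, hinv, mul_assoc]
    _ ≤ 1 * v ^ q := by
        gcongr
        exact inv_mul_le_one_of_le₀ hvu' (rpow_nonneg hu _)
    _ = v ^ q := one_mul _

end Real

theorem stmt_0 (p q δ u v : ℝ) (hp : 2 ≤ p) (hq : q = p / (p - 1))
    (hδ : δ = q * (q - 1) / 8) (hu : 0 ≤ u) (hv : 0 ≤ v)
    (huv : v ^ q ≤ u ^ p) :
    u * ((1 + 2 * δ / p) * (p * u ^ (p - 1))) +
      v * ((1 + (2 / q - 1) * δ) * (q * v ^ (q - 1))) -
      ((1 + 2 * δ / p) * u ^ p + (1 + (2 / q - 1) * δ) * v ^ q) ≥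
    (p - 1) * u ^ (p - 2) * u ^ 2 + (q - 1) * u ^ (2 - p) * v ^ 2 := by
  have hp1 : 0 < p - 1 := by linarith
  have hq1 : 1 < q := by rw [hq, lt_div_iff₀ hp1]; linarith
  have hq2 : q ≤ 2 := by rw [hq, div_le_iff₀ hp1]; linarith
  have hpq : (p - 1) * q = p := by rw [hq]; field_simp
  have hδ_nonneg : 0 ≤ δ := by rw [hδ]; nlinarith
  have hmixed := rpow_two_sub_mul_sq_le hu hv (by linarith) hq2 hpq huv
  have hu_euler := mul_rpow_sub_one hu (by linarith : p ≠ 0)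
  have hv_euler := mul_rpow_sub_one hv (by linarith : q ≠ 0)
  have hu_sq := rpow_sub_two_mul_sq hu (by linarith : p ≠ 0)
  have hu_gain : 0 ≤ 2 * δ / p * (p - 1) * u ^ p := by positivity
  have hv_gain : 0 ≤ (2 / q - 1) * δ * (q - 1) * v ^ q := by
    have h2q : 0 ≤ 2 / q - 1 := by rw [sub_nonneg, le_div_iff₀ (by linarith)]; linarith
    have hq1' : 0 ≤ q - 1 := by linarith
    positivity
  linear_combination (q - 1) * hmixed + hu_gain + hv_gain - (1 + 2 * δ / p) * p * hu_euler
    - (1 + (2 / q - 1) * δ) * q * hv_euler + (p - 1) * hu_sq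
end

section
/- For 1 < q ≤ 2, u, v > 0 with u^p ≤ v^q (where p is the conjugate exponent of q), and any A, B ≥ 0, the quantity Z − 2V − W, where Z = (pu^{p−2} + 2δv^{2−q})A² + ((2−q)δu²v^{−q} + qv^{q−2})B², V = 2δ(2−q)uv^{1−q}AB, W = (2−q)q(δu²v^{−q} + v^{q−2})B², and δ = q(q−1)/8, satisfies Z − 2V − W ≥ δ(v^{2−q}A² + 3v^{q−2}B²). -/
/-!
Write `X = v^(2-q)`, `Y = v^(q-2)` (so `XY = 1`), `t = u v^(1-q)` and `s = u² v^(-q) = t² Y`.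
The constraint `u^p ≤ v^q` is `u ≤ v^(q-1)`, i.e. `t ≤ 1`, hence `s ≤ Y`. Using `q(q-1) = 8δ`,
the difference of the two sides is at least `δ (X A² - 4AB + 4YB²) = δ Y (XA - 2B)²`, because
`(2-q)t ≤ 1` controls the cross term and `(2-q)(q-1) ≤ 1/4` controls the `s`-term.
-/

open Real

lemma le_rpow_of_rpow_le_rpow_mul {u v p r : ℝ} (hu : 0 ≤ u) (hv : 0 ≤ v) (hp : 0 < p)
    (h : u ^ p ≤ v ^ (r * p)) : u ≤ v ^ r := by
  rw [rpow_mul hv] at h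
  exact (rpow_le_rpow_iff hu (rpow_nonneg hv r) hp).mp h

lemma four_mul_le_of_mul_eq_one {X Y : ℝ} (A B : ℝ) (hY : 0 ≤ Y) (hXY : X * Y = 1) :
    4 * (A * B) ≤ X * A ^ 2 + 4 * (Y * B ^ 2) := by
  have hsq : 0 ≤ Y * (X * A - 2 * B) ^ 2 := mul_nonneg hY (sq_nonneg _)
  linear_combination hsq + (X * A ^ 2 - 4 * A * B) * hXY

lemma sub_mul_sub_one_le_quarter (q : ℝ) : (2 - q) * (q - 1) ≤ 1 / 4 := by
  nlinarith [sq_nonneg (2 * q - 3)]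

lemma quadratic_form_lower_bound {P X Y s t q δ A B : ℝ} (hδ : δ = q * (q - 1) / 8)
    (hq1 : 1 < q) (hq2 : q ≤ 2) (hP : 0 ≤ P) (hY : 0 ≤ Y) (hXY : X * Y = 1) (hsY : s ≤ Y)
    (ht1 : t ≤ 1) (hA : 0 ≤ A) (hB : 0 ≤ B) :
    ((P + 2 * δ * X) * A ^ 2 + ((2 - q) * δ * s + q * Y) * B ^ 2) -
      2 * (2 * δ * (2 - q) * t * A * B) - (2 - q) * q * (δ * s + Y) * B ^ 2 ≥
    δ * (X * A ^ 2 + 3 * Y * B ^ 2) := by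
  have hδ0 : 0 ≤ δ := by rw [hδ]; nlinarith
  have hcross : (2 - q) * t * (A * B) ≤ A * B :=
    mul_le_of_le_one_left (mul_nonneg hA hB) (by nlinarith)
  have hc : 0 ≤ (2 - q) * (q - 1) := mul_nonneg (by linarith) (by linarith)
  have hsB : (2 - q) * (q - 1) * (s * B ^ 2) ≤ 1 / 4 * (Y * B ^ 2) :=
    calc (2 - q) * (q - 1) * (s * B ^ 2) ≤ (2 - q) * (q - 1) * (Y * B ^ 2) := by gcongr
      _ ≤ 1 / 4 * (Y * B ^ 2) := by gcongr; exact sub_mul_sub_one_le_quarter q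
  have hform := four_mul_le_of_mul_eq_one A B hY hXY
  have hbracket :
      0 ≤ X * A ^ 2 - 4 * ((2 - q) * t * (A * B)) + 5 * (Y * B ^ 2) -
        (2 - q) * (q - 1) * (s * B ^ 2) := by
    linarith [mul_nonneg hY (sq_nonneg B)]
  have hq : q * (q - 1) = 8 * δ := by rw [hδ]; ring
  have hexpand :
      ((P + 2 * δ * X) * A ^ 2 + ((2 - q) * δ * s + q * Y) * B ^ 2) -
        2 * (2 * δ * (2 - q) * t * A * B) - (2 - q) * q * (δ * s + Y) * B ^ 2 -
        δ * (X * A ^ 2 + 3 * Y * B ^ 2) =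
      P * A ^ 2 + δ * (X * A ^ 2 - 4 * ((2 - q) * t * (A * B)) + 5 * (Y * B ^ 2) -
        (2 - q) * (q - 1) * (s * B ^ 2)) := by
    linear_combination (Y * B ^ 2) * hq
  linarith [mul_nonneg hδ0 hbracket, mul_nonneg hP (sq_nonneg A)]

theorem stmt_2 (p q δ u v A B : ℝ) (hq1 : 1 < q) (hq2 : q ≤ 2)
    (hp : p = q / (q - 1)) (hδ : δ = q * (q - 1) / 8)
    (hu : 0 < u) (hv : 0 < v) (huv : u ^ p ≤ v ^ q)
    (hA : 0 ≤ A) (hB : 0 ≤ B) :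
    ((p * u ^ (p - 2) + 2 * δ * v ^ (2 - q)) * A ^ 2 +
        ((2 - q) * δ * u ^ 2 * v ^ (-q) + q * v ^ (q - 2)) * B ^ 2) -
      2 * (2 * δ * (2 - q) * u * v ^ (1 - q) * A * B) -
      (2 - q) * q * (δ * u ^ 2 * v ^ (-q) + v ^ (q - 2)) * B ^ 2 ≥
    δ * (v ^ (2 - q) * A ^ 2 + 3 * v ^ (q - 2) * B ^ 2) := by
  have hp0 : 0 < p := by rw [hp]; exact div_pos (by linarith) (by linarith)
  have hq : q = (q - 1) * p := by rw [hp]; field_simp [(by linarith : q - 1 ≠ 0)]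
  have hu_le : u ≤ v ^ (q - 1) :=
    le_rpow_of_rpow_le_rpow_mul hu.le hv.le hp0 (by rwa [← hq])
  have ht1 : u * v ^ (1 - q) ≤ 1 :=
    calc u * v ^ (1 - q) ≤ v ^ (q - 1) * v ^ (1 - q) := by gcongr
      _ = 1 := by rw [← rpow_add hv]; norm_num
  have hs : u ^ 2 * v ^ (-q) = (u * v ^ (1 - q)) ^ 2 * v ^ (q - 2) := by
    rw [mul_pow, ← rpow_natCast (v ^ (1 - q)), ← rpow_mul hv.le, mul_assoc, ← rpow_add hv]
    ring_nf
  have hsY : u ^ 2 * v ^ (-q) ≤ v ^ (q - 2) := by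
    rw [hs]
    exact mul_le_of_le_one_left (by positivity) (pow_le_one₀ (by positivity) ht1)
  have hXY : v ^ (2 - q) * v ^ (q - 2) = 1 := by rw [← rpow_add hv]; norm_num
  have key := quadratic_form_lower_bound (P := p * u ^ (p - 2)) hδ hq1 hq2 (by positivity)
    (by positivity) hXY hsY ht1 hA hB
  simpa only [mul_assoc] using key
end

section
/- For every t > 0 and x ∈ ℝⁿ, (2π)^{−n/2} ∫_{ℝⁿ} K_t(x,y) dy = (cosh 2t)^{−n/2} exp(−|x|² tanh(2t)/2); in particular this is at most 1. -/
/-! Completing the square in `y` turns the Mehler kernel into a Gaussian of variance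
`tanh (2t)` centred at `x / cosh (2t)`, so the integral is `(2π / cosh 2t)^{n/2}` times
`exp (-(coth 2t - 1 / (sinh 2t cosh 2t)) |x|² / 2)`; the identity `cosh² - sinh² = 1`
reduces that coefficient to `tanh 2t`. Both factors are at most `1` since `cosh ≥ 1`
and `tanh (2t) ≥ 0`. -/

open Real MeasureTheory

/-- The Hermite (Mehler) heat kernel on ℝⁿ. -/
noncomputable def hermiteHeatKernel (n : ℕ) (t : ℝ) (x y : EuclideanSpace ℝ (Fin n)) : ℝ :=
  (Real.sinh (2 * t)) ^ (-(n : ℝ) / 2) *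
    Real.exp (-(‖x‖ ^ 2 + ‖y‖ ^ 2) / 2 * (Real.cosh (2 * t) / Real.sinh (2 * t)) +
      (inner ℝ x y : ℝ) / Real.sinh (2 * t))

theorem integral_exp_neg_mul_sq_norm_add_inner {V : Type*} [NormedAddCommGroup V]
    [InnerProductSpace ℝ V] [FiniteDimensional ℝ V] [MeasurableSpace V] [BorelSpace V]
    {b : ℝ} (hb : 0 < b) (a : ℝ) (w : V) :
    ∫ v : V, exp (-b * ‖v‖ ^ 2 + a * inner ℝ w v) =
      (π / b) ^ (Module.finrank ℝ V / 2 : ℝ) * exp (a ^ 2 * ‖w‖ ^ 2 / (4 * b)) := by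
  have h := GaussianFourier.integral_cexp_neg_mul_sq_norm_add
    (b := (b : ℂ)) (by simpa using hb) (a : ℂ) w
  rw [← Complex.ofReal_inj]
  push_cast
  rw [Complex.ofReal_cpow (by positivity)]
  push_cast
  rw [← h]
  norm_cast

theorem hermiteHeatKernel_eq (n : ℕ) (t : ℝ) (x y : EuclideanSpace ℝ (Fin n)) :
    hermiteHeatKernel n t x y =
      sinh (2 * t) ^ (-(n : ℝ) / 2) *
        exp (-(cosh (2 * t) / (2 * sinh (2 * t))) * ‖x‖ ^ 2) *
        exp (-(cosh (2 * t) / (2 * sinh (2 * t))) * ‖y‖ ^ 2 +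
          (1 / sinh (2 * t)) * inner ℝ x y) := by
  rw [hermiteHeatKernel, mul_assoc, ← exp_add]
  ring_nf

theorem integral_hermiteHeatKernel (n : ℕ) {t : ℝ} (ht : 0 < t)
    (x : EuclideanSpace ℝ (Fin n)) :
    ∫ y, hermiteHeatKernel n t x y =
      (2 * π / cosh (2 * t)) ^ ((n : ℝ) / 2) * exp (-‖x‖ ^ 2 * tanh (2 * t) / 2) := by
  have hs : 0 < sinh (2 * t) := sinh_pos_iff.2 (by linarith)
  have hc : 0 < cosh (2 * t) := cosh_pos _
  have hb : 0 < cosh (2 * t) / (2 * sinh (2 * t)) := by positivity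
  simp_rw [hermiteHeatKernel_eq, integral_const_mul,
    integral_exp_neg_mul_sq_norm_add_inner hb, finrank_euclideanSpace_fin]
  have hpow : sinh (2 * t) ^ (-(n : ℝ) / 2) *
      (π / (cosh (2 * t) / (2 * sinh (2 * t)))) ^ ((n : ℝ) / 2) =
        (2 * π / cosh (2 * t)) ^ ((n : ℝ) / 2) := by
    rw [neg_div, rpow_neg hs.le, inv_mul_eq_iff_eq_mul₀ (by positivity),
      ← mul_rpow hs.le (by positivity)]
    congr 1
    field_simp
  have hexp : exp (-(cosh (2 * t) / (2 * sinh (2 * t))) * ‖x‖ ^ 2) *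
      exp ((1 / sinh (2 * t)) ^ 2 * ‖x‖ ^ 2 / (4 * (cosh (2 * t) / (2 * sinh (2 * t))))) =
        exp (-‖x‖ ^ 2 * tanh (2 * t) / 2) := by
    rw [← exp_add, tanh_eq_sinh_div_cosh]
    congr 1
    field_simp
    linear_combination (-4 * ‖x‖ ^ 2) * cosh_sq (2 * t)
  rw [← hpow, ← hexp]
  ring

theorem stmt_6 (n : ℕ) (t : ℝ) (ht : 0 < t) (x : EuclideanSpace ℝ (Fin n)) :
    (2 * π) ^ (-(n : ℝ) / 2) * ∫ y, hermiteHeatKernel n t x y =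
        (Real.cosh (2 * t)) ^ (-(n : ℝ) / 2) *
          Real.exp (-‖x‖ ^ 2 * Real.tanh (2 * t) / 2) ∧
      (2 * π) ^ (-(n : ℝ) / 2) * ∫ y, hermiteHeatKernel n t x y ≤ 1 := by
  have hpow : (2 * π) ^ (-(n : ℝ) / 2) * (2 * π / cosh (2 * t)) ^ ((n : ℝ) / 2) =
      cosh (2 * t) ^ (-(n : ℝ) / 2) := by
    rw [div_rpow (by positivity) (cosh_pos _).le, neg_div, rpow_neg (by positivity),
      rpow_neg (cosh_pos _).le]
    field_simp
  have heq : (2 * π) ^ (-(n : ℝ) / 2) * ∫ y, hermiteHeatKernel n t x y =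
      cosh (2 * t) ^ (-(n : ℝ) / 2) * exp (-‖x‖ ^ 2 * tanh (2 * t) / 2) := by
    rw [integral_hermiteHeatKernel n ht x, ← mul_assoc, hpow]
  refine ⟨heq, heq ▸ mul_le_one₀ ?_ (exp_nonneg _) (exp_le_one_iff.2 ?_)⟩
  · exact rpow_le_one_of_one_le_of_nonpos (one_le_cosh _)
      (by rw [neg_div]; exact neg_nonpos.2 (by positivity))
  · have : 0 ≤ tanh (2 * t) := by rw [tanh_eq_sinh_div_cosh]; positivity
    have : 0 ≤ ‖x‖ ^ 2 * tanh (2 * t) := by positivity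
    linarith
end

section
/- For t > 0 and x, y ∈ ℝⁿ, the subordinated kernel P_t(x,y) = (2π)^{−n/2} ∫_0^∞ K_{t²/(4s)}(x,y) dμ(s), where K is the Hermite heat kernel and dμ(s) = π^{−1/2}e^{−s}s^{−1/2}ds, satisfies P_t(x,y) ≤ Γ((n+1)/2) π^{−(n+1)/2} t (|x−y|² + t²)^{−(n+1)/2}, i.e. the Hermite Poisson kernel is dominated by the classical Poisson kernel of ℝⁿ. -/
open Real MeasureTheory

/-- The Hermite Poisson kernel, obtained by subordination. -/
noncomputable def hermitePoissonKernel (n : ℕ) (t : ℝ) (x y : EuclideanSpace ℝ (Fin n)) : ℝ :=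
  (2 * π) ^ (-(n : ℝ) / 2) *
    ∫ s in Set.Ioi (0 : ℝ),
      hermiteHeatKernel n (t ^ 2 / (4 * s)) x y *
        (π ^ (-(1 : ℝ) / 2) * Real.exp (-s) * s ^ (-(1 : ℝ) / 2))

lemma sinh_le_mul_cosh {t : ℝ} (ht : 0 ≤ t) : sinh t ≤ t * cosh t := by
  rcases ht.eq_or_lt with rfl | ht
  · simp
  obtain ⟨c, hc, hslope⟩ := exists_hasDerivAt_eq_slope sinh cosh ht
    continuous_sinh.continuousOn (fun x _ => hasDerivAt_sinh x)
  have hcosh : cosh c ≤ cosh t := by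
    rw [cosh_le_cosh, abs_of_pos hc.1, abs_of_pos ht]
    exact hc.2.le
  rw [sinh_zero, sub_zero, sub_zero, eq_div_iff ht.ne'] at hslope
  nlinarith

lemma sinh_two_mul_le_mul_cosh_two_mul_add_one {t : ℝ} (ht : 0 ≤ t) :
    sinh (2 * t) ≤ t * (cosh (2 * t) + 1) := by
  rw [sinh_two_mul, cosh_two_mul, ← cosh_sq_sub_sinh_sq t]
  nlinarith [sinh_le_mul_cosh ht, cosh_pos t]

/-- Completing the squares turns the Mehler exponent into
`-(‖x - y‖² coth t + ‖x + y‖² tanh t) / 4`, and `coth t ≥ 1 / t`, `tanh t ≥ 0`. -/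
lemma mehler_exponent_le {E : Type*} [NormedAddCommGroup E] [InnerProductSpace ℝ E]
    {t : ℝ} (ht : 0 < t) (x y : E) :
    -(‖x‖ ^ 2 + ‖y‖ ^ 2) / 2 * (cosh (2 * t) / sinh (2 * t)) + inner ℝ x y / sinh (2 * t) ≤
      -‖x - y‖ ^ 2 / (4 * t) := by
  have hsinh : 0 < sinh (2 * t) := sinh_pos_iff.2 (by linarith)
  have hsquares : -(‖x‖ ^ 2 + ‖y‖ ^ 2) / 2 * (cosh (2 * t) / sinh (2 * t)) +
      inner ℝ x y / sinh (2 * t) =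
      -(‖x - y‖ ^ 2 * (cosh (2 * t) + 1) + ‖x + y‖ ^ 2 * (cosh (2 * t) - 1)) /
        (4 * sinh (2 * t)) := by
    rw [norm_sub_sq_real, norm_add_sq_real]
    field_simp
    ring
  rw [hsquares, div_le_div_iff₀ (by positivity) (by positivity)]
  nlinarith [mul_le_mul_of_nonneg_left (sinh_two_mul_le_mul_cosh_two_mul_add_one ht.le)
      (sq_nonneg ‖x - y‖),
    mul_nonneg (mul_nonneg (sq_nonneg ‖x + y‖) ht.le) (sub_nonneg.2 (one_le_cosh (2 * t)))]

lemma hermiteHeatKernel_nonneg (n : ℕ) {t : ℝ} (ht : 0 ≤ t) (x y : EuclideanSpace ℝ (Fin n)) :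
    0 ≤ hermiteHeatKernel n t x y :=
  mul_nonneg (rpow_nonneg (sinh_nonneg_iff.2 (by linarith)) _) (exp_pos _).le

lemma hermiteHeatKernel_le (n : ℕ) {t : ℝ} (ht : 0 < t) (x y : EuclideanSpace ℝ (Fin n)) :
    hermiteHeatKernel n t x y ≤ (2 * t) ^ (-(n : ℝ) / 2) * exp (-‖x - y‖ ^ 2 / (4 * t)) := by
  have hsinh : 2 * t ≤ sinh (2 * t) := (self_lt_sinh_iff.2 (by linarith)).le
  have hexponent : -(n : ℝ) / 2 ≤ 0 := by
    have : (0 : ℝ) ≤ n := n.cast_nonneg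
    linarith
  exact mul_le_mul (rpow_le_rpow_of_nonpos (by positivity) hsinh hexponent)
    (exp_le_exp.2 (mehler_exponent_le ht x y)) (exp_pos _).le (by positivity)

lemma hermiteHeatKernel_subordinand_le (n : ℕ) {t s : ℝ} (ht : 0 < t) (hs : 0 < s)
    (x y : EuclideanSpace ℝ (Fin n)) :
    hermiteHeatKernel n (t ^ 2 / (4 * s)) x y *
        (π ^ (-(1 : ℝ) / 2) * exp (-s) * s ^ (-(1 : ℝ) / 2)) ≤
      (t ^ 2 / 2) ^ (-(n : ℝ) / 2) * π ^ (-(1 : ℝ) / 2) *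
        (s ^ (((n : ℝ) + 1) / 2 - 1) * exp (-((‖x - y‖ ^ 2 + t ^ 2) / t ^ 2 * s))) := by
  have hscale : (2 * (t ^ 2 / (4 * s))) ^ (-(n : ℝ) / 2) =
      (t ^ 2 / 2) ^ (-(n : ℝ) / 2) * s ^ ((n : ℝ) / 2) := by
    rw [show 2 * (t ^ 2 / (4 * s)) = t ^ 2 / 2 * s⁻¹ by field_simp; ring,
      mul_rpow (by positivity) (by positivity), inv_rpow hs.le, ← rpow_neg hs.le, neg_div, neg_neg]
  have hpower : s ^ ((n : ℝ) / 2) * s ^ (-(1 : ℝ) / 2) = s ^ (((n : ℝ) + 1) / 2 - 1) := by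
    rw [← rpow_add hs]
    ring_nf
  have hexp : exp (-‖x - y‖ ^ 2 / (4 * (t ^ 2 / (4 * s)))) * exp (-s) =
      exp (-((‖x - y‖ ^ 2 + t ^ 2) / t ^ 2 * s)) := by
    rw [← exp_add]
    congr 1
    field_simp
    ring
  calc _ ≤ (2 * (t ^ 2 / (4 * s))) ^ (-(n : ℝ) / 2) *
          exp (-‖x - y‖ ^ 2 / (4 * (t ^ 2 / (4 * s)))) *
          (π ^ (-(1 : ℝ) / 2) * exp (-s) * s ^ (-(1 : ℝ) / 2)) :=
        mul_le_mul_of_nonneg_right (hermiteHeatKernel_le n (by positivity) x y) (by positivity)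
    _ = _ := by
      rw [hscale, ← hpower, ← hexp]
      ring

lemma integral_hermiteHeatKernel_subordinand_le (n : ℕ) {t : ℝ} (ht : 0 < t)
    (x y : EuclideanSpace ℝ (Fin n)) :
    ∫ s in Set.Ioi (0 : ℝ), hermiteHeatKernel n (t ^ 2 / (4 * s)) x y *
        (π ^ (-(1 : ℝ) / 2) * exp (-s) * s ^ (-(1 : ℝ) / 2)) ≤
      (t ^ 2 / 2) ^ (-(n : ℝ) / 2) * π ^ (-(1 : ℝ) / 2) *
        ((t ^ 2 / (‖x - y‖ ^ 2 + t ^ 2)) ^ (((n : ℝ) + 1) / 2) * Gamma (((n : ℝ) + 1) / 2)) := by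
  have hw : (0 : ℝ) < ((n : ℝ) + 1) / 2 := by positivity
  have hrate : 0 < (‖x - y‖ ^ 2 + t ^ 2) / t ^ 2 := by positivity
  have hgamma := integral_rpow_mul_exp_neg_mul_Ioi hw hrate
  rw [one_div_div] at hgamma
  rw [← hgamma, ← integral_const_mul]
  refine integral_mono_of_nonneg (ae_restrict_of_forall_mem measurableSet_Ioi fun s hs => ?_)
    ?_ (ae_restrict_of_forall_mem measurableSet_Ioi fun s hs =>
      hermiteHeatKernel_subordinand_le n ht hs x y)
  · have hs : 0 < s := hs
    exact mul_nonneg (hermiteHeatKernel_nonneg n (by positivity) x y) (by positivity)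
  · have hint := integrableOn_rpow_mul_exp_neg_mul_rpow (s := ((n : ℝ) + 1) / 2 - 1)
      (by linarith) one_pos hrate
    simp only [rpow_one, neg_mul] at hint
    exact hint.const_mul _

lemma subordination_constant_eq (d : ℝ) {t B : ℝ} (ht : 0 < t) (hB : 0 < B) :
    (2 * π) ^ (-d / 2) * ((t ^ 2 / 2) ^ (-d / 2) * π ^ (-(1 : ℝ) / 2) *
        (t ^ 2 / B) ^ ((d + 1) / 2)) =
      π ^ (-(d + 1) / 2) * t * B ^ (-(d + 1) / 2) := by
  have hprod : (2 * π) ^ (-d / 2) * (t ^ 2 / 2) ^ (-d / 2) = π ^ (-d / 2) * (t ^ 2) ^ (-d / 2) := by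
    rw [← mul_rpow (by positivity) (by positivity), ← mul_rpow pi_pos.le (by positivity)]
    ring_nf
  have hpi_pow : π ^ (-d / 2) * π ^ (-(1 : ℝ) / 2) = π ^ (-(d + 1) / 2) := by
    rw [← rpow_add pi_pos]
    ring_nf
  have ht_pow : (t ^ 2) ^ (-d / 2) * (t ^ 2) ^ ((d + 1) / 2) = t := by
    rw [← rpow_add (by positivity), show -d / 2 + (d + 1) / 2 = 1 / 2 by ring,
      ← sqrt_eq_rpow, sqrt_sq ht.le]
  have hB_pow : B ^ (-(d + 1) / 2) = (B ^ ((d + 1) / 2))⁻¹ := by rw [neg_div, rpow_neg hB.le]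
  rw [div_rpow (by positivity) hB.le]
  linear_combination (π ^ (-(1 : ℝ) / 2) * (t ^ 2) ^ ((d + 1) / 2) / B ^ ((d + 1) / 2)) * hprod +
    ((t ^ 2) ^ (-d / 2) * (t ^ 2) ^ ((d + 1) / 2) / B ^ ((d + 1) / 2)) * hpi_pow +
    (π ^ (-(d + 1) / 2) / B ^ ((d + 1) / 2)) * ht_pow - (π ^ (-(d + 1) / 2) * t) * hB_pow

theorem stmt_10 (n : ℕ) (t : ℝ) (ht : 0 < t) (x y : EuclideanSpace ℝ (Fin n)) :
    hermitePoissonKernel n t x y ≤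
      Real.Gamma ((n + 1) / 2) * π ^ (-((n : ℝ) + 1) / 2) * t *
        (‖x - y‖ ^ 2 + t ^ 2) ^ (-((n : ℝ) + 1) / 2) := by
  calc hermitePoissonKernel n t x y
      ≤ (2 * π) ^ (-(n : ℝ) / 2) * ((t ^ 2 / 2) ^ (-(n : ℝ) / 2) * π ^ (-(1 : ℝ) / 2) *
          ((t ^ 2 / (‖x - y‖ ^ 2 + t ^ 2)) ^ (((n : ℝ) + 1) / 2) *
            Gamma (((n : ℝ) + 1) / 2))) :=
        mul_le_mul_of_nonneg_left (integral_hermiteHeatKernel_subordinand_le n ht x y)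
          (by positivity)
    _ = _ := by
      linear_combination Gamma (((n : ℝ) + 1) / 2) *
        subordination_constant_eq n ht (by positivity : 0 < ‖x - y‖ ^ 2 + t ^ 2)
end
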